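/- arXiv:2103.09646 — 2 statements merged into one kernel-verified Lean document; each statement's English description precedes it below -/
import Mathlib

section
/- The Kolmogorov kernel G(t,x,v) := (3/(4π²t⁴))^{d/2} exp(-3|x - (t/2)v|²/t³ - |v|²/(4t)) for t > 0 satisfies the Kolmogorov equation ∂_t G + v·∇_x G = Δ_v G on (0,∞) × ℝ^d × ℝ^d. -/
open Real

/-- The Kolmogorov kernel `G(t,x,v) = (3/(4π²t⁴))^{d/2} exp(-3|x-(t/2)v|²/t³ - |v|²/(4t))`. -/
noncomputable def kolmogorovKernel (d : ℕ) (t : ℝ)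
    (x v : EuclideanSpace ℝ (Fin d)) : ℝ :=
  (3 / (4 * π ^ 2 * t ^ 4)) ^ ((d : ℝ) / 2) *
    Real.exp (-(3 * ‖x - (t / 2) • v‖ ^ 2) / t ^ 3 - ‖v‖ ^ 2 / (4 * t))

/-- Fréchet derivative of the kernel in the velocity variable. -/
lemma kernel_hasFDerivAt_v (d : ℕ) {t : ℝ} (ht : 0 < t) (x w : EuclideanSpace ℝ (Fin d)) :
    HasFDerivAt (fun u => kolmogorovKernel d t x u)
      (kolmogorovKernel d t x w •
        ((3 / t ^ 2) • innerSL ℝ (x - (t / 2) • w) - (1 / (2 * t)) • innerSL ℝ w)) w := by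
  have ht' : t ≠ 0 := ht.ne'
  have h0 : HasFDerivAt (fun u : EuclideanSpace ℝ (Fin d) => x - (t / 2) • u)
      (-((t / 2) • ContinuousLinearMap.id ℝ (EuclideanSpace ℝ (Fin d)))) w :=
    ((hasFDerivAt_id w).const_smul (t / 2)).const_sub x
  have h1 := h0.norm_sq
  have h2 := (hasFDerivAt_id w).norm_sq
  have h3 := (((h1.const_mul (3 : ℝ)).neg.mul_const ((t ^ 3)⁻¹)).sub
      (h2.mul_const ((4 * t)⁻¹))).exp
  have h4 := h3.const_mul ((3 / (4 * π ^ 2 * t ^ 4)) ^ ((d : ℝ) / 2))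
  simp only [kolmogorovKernel, div_eq_mul_inv]
  refine HasFDerivAt.congr_fderiv h4 ?_
  ext h
  simp [ContinuousLinearMap.smul_apply, ContinuousLinearMap.comp_apply,
    ContinuousLinearMap.neg_apply, ContinuousLinearMap.sub_apply, innerSL_apply_apply,
    inner_smul_right, real_inner_smul_left, smul_eq_mul, mul_comm]
  field_simp
  ring

/-- Time derivative of the kernel. -/
lemma kernel_deriv_t (d : ℕ) {t : ℝ} (ht : 0 < t) (x v : EuclideanSpace ℝ (Fin d)) :
    deriv (fun s => kolmogorovKernel d s x v) t
      = kolmogorovKernel d t x v * (-(2*(d:ℝ))/t + 9*‖x - (t/2) • v‖^2/t^4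
          + 3*(inner ℝ (x - (t/2) • v) v : ℝ)/t^3 + ‖v‖^2/(4*t^2)) := by
  have ht' : t ≠ 0 := ht.ne'
  have hπ : π ≠ 0 := Real.pi_ne_zero
  have hb : (0:ℝ) < 3 / (4 * π ^ 2 * t ^ 4) := by positivity
  have hDen : HasDerivAt (fun s : ℝ => 4 * π ^ 2 * s ^ 4) (16 * π ^ 2 * t ^ 3) t :=
    ((hasDerivAt_pow 4 t).const_mul (4 * π ^ 2)).congr_deriv (by norm_num; ring)
  have hA := ((hasDerivAt_const t (3:ℝ)).div hDen (by positivity)).rpow_const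
    (p := (d : ℝ) / 2) (Or.inl hb.ne')
  have hxv : HasDerivAt (fun s : ℝ => x - (s / 2) • v) (-((1/2 : ℝ) • v)) t :=
    (((hasDerivAt_id t).div_const 2).smul_const v).const_sub x
  have hN := hxv.norm_sq
  have hq := ((hN.const_mul (3:ℝ)).neg.div (hasDerivAt_pow 3 t) (pow_ne_zero 3 ht')).sub
      ((hasDerivAt_const t (‖v‖^2)).div ((hasDerivAt_id t).const_mul 4) (by positivity))
  have hB := hq.exp
  have hG := hA.mul hB
  refine HasDerivAt.deriv (HasDerivAt.congr_deriv (by simp only [kolmogorovKernel]; exact hG) ?_)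
  simp only [kolmogorovKernel]
  simp only [Pi.div_apply]
  rw [Real.rpow_sub_one hb.ne']
  simp only [inner_neg_right, real_inner_smul_right]
  norm_num
  field_simp
  ring

/-- Space derivative of the kernel in direction `v`. -/
lemma kernel_fderiv_x (d : ℕ) {t : ℝ} (ht : 0 < t) (x v : EuclideanSpace ℝ (Fin d)) :
    fderiv ℝ (fun y => kolmogorovKernel d t y v) x v
      = kolmogorovKernel d t x v * (-(6*(inner ℝ (x - (t/2) • v) v : ℝ))/t^3) := by
  have ht' : t ≠ 0 := ht.ne'
  have hx1 := ((hasFDerivAt_id x).sub_const ((t/2) • v)).norm_sq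
  have hx2 := (((hx1.const_mul (3:ℝ)).neg.mul_const ((t^3)⁻¹)).sub_const (‖v‖^2 * (4*t)⁻¹)).exp
  have hx3 := hx2.const_mul ((3/(4*π^2*t^4)) ^ ((d:ℝ)/2))
  have hxK : HasFDerivAt (fun y => kolmogorovKernel d t y v)
      (kolmogorovKernel d t x v • ((-6/t^3) • innerSL ℝ (x - (t/2) • v))) x := by
    simp only [kolmogorovKernel, div_eq_mul_inv]
    refine hx3.congr_fderiv ?_
    ext h
    simp [innerSL_apply_apply, smul_eq_mul]
    field_simp
    ring
  rw [hxK.fderiv]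
  simp only [ContinuousLinearMap.smul_apply, ContinuousLinearMap.coe_smul', Pi.smul_apply,
    innerSL_apply_apply, smul_eq_mul]
  ring

/-- Second derivative of the kernel in the velocity direction `eᵢ`. -/
lemma kernel_second_v (d : ℕ) {t : ℝ} (ht : 0 < t) (x v : EuclideanSpace ℝ (Fin d))
    (i : Fin d) :
    fderiv ℝ (fun w => fderiv ℝ (fun u => kolmogorovKernel d t x u) w
        (EuclideanSpace.single i 1)) v (EuclideanSpace.single i 1)
      = kolmogorovKernel d t x v * (-(2/t) + ((3/t^2) * x i - (2/t) * v i)^2) := by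
  have ht' : t ≠ 0 := ht.ne'
  have hrw : (fun w => fderiv ℝ (fun u => kolmogorovKernel d t x u) w (EuclideanSpace.single i 1))
      = fun w : EuclideanSpace ℝ (Fin d) =>
          kolmogorovKernel d t x w * ((3/t^2) * x i - (2/t) * w i) := by
    funext w
    rw [(kernel_hasFDerivAt_v d ht x w).fderiv]
    simp only [ContinuousLinearMap.smul_apply, ContinuousLinearMap.sub_apply,
      ContinuousLinearMap.coe_smul', Pi.smul_apply, innerSL_apply_apply,
      EuclideanSpace.inner_single_right, RCLike.star_def, conj_trivial, one_mul,
      PiLp.sub_apply, PiLp.smul_apply, smul_eq_mul]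
    field_simp
    ring
  rw [hrw]
  have hy : HasFDerivAt (fun w : EuclideanSpace ℝ (Fin d) => (3/t^2) * x i - (2/t) * w i)
      (-((2/t) • (EuclideanSpace.proj i : EuclideanSpace ℝ (Fin d) →L[ℝ] ℝ))) v :=
    (((EuclideanSpace.proj i : EuclideanSpace ℝ (Fin d) →L[ℝ] ℝ).hasFDerivAt.const_mul
      (2/t)).const_sub ((3/t^2) * x i))
  have hmul := (kernel_hasFDerivAt_v d ht x v).mul hy
  rw [show (fun w => kolmogorovKernel d t x w * ((3/t^2) * x i - (2/t) * w i)) = (fun u => kolmogorovKernel d t x u) * (fun w : EuclideanSpace ℝ (Fin d) => (3/t^2) * x i - (2/t) * w i) from rfl, hmul.fderiv]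
  simp only [ContinuousLinearMap.add_apply, ContinuousLinearMap.smul_apply,
    ContinuousLinearMap.sub_apply, ContinuousLinearMap.neg_apply,
    ContinuousLinearMap.coe_smul', Pi.smul_apply, innerSL_apply_apply,
    EuclideanSpace.inner_single_right, RCLike.star_def, conj_trivial, one_mul,
    PiLp.proj_apply, EuclideanSpace.single_apply, if_pos rfl, ↓reduceIte,
    PiLp.sub_apply, PiLp.smul_apply, smul_eq_mul]
  field_simp
  ring

/-- The Kolmogorov kernel satisfies `∂_t G + v·∇_x G = Δ_v G` on `(0,∞) × ℝᵈ × ℝᵈ`. -/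
theorem kolmogorovKernel_solves (d : ℕ) (t : ℝ) (ht : 0 < t)
    (x v : EuclideanSpace ℝ (Fin d)) :
    deriv (fun s => kolmogorovKernel d s x v) t
      + fderiv ℝ (fun y => kolmogorovKernel d t y v) x v
      = ∑ i : Fin d,
          fderiv ℝ (fun w => fderiv ℝ (fun u => kolmogorovKernel d t x u) w
            (EuclideanSpace.single i 1)) v (EuclideanSpace.single i 1) := by
  have ht' : t ≠ 0 := ht.ne'
  rw [kernel_deriv_t d ht x v, kernel_fderiv_x d ht x v,
    Finset.sum_congr rfl (fun i _ => kernel_second_v d ht x v i)]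
  have hV : ‖v‖^2 = ∑ j, v j ^ 2 := by
    rw [← real_inner_self_eq_norm_sq, PiLp.inner_apply]
    simp [RCLike.inner_apply, conj_trivial, sq]
  have hU : ‖x - (t/2) • v‖^2 = ∑ j, (x j - t/2 * v j)^2 := by
    rw [← real_inner_self_eq_norm_sq, PiLp.inner_apply]
    simp [RCLike.inner_apply, conj_trivial, PiLp.sub_apply, PiLp.smul_apply, smul_eq_mul, sq]
  have hP : (inner ℝ (x - (t/2) • v) v : ℝ) = ∑ j, (x j - t/2 * v j) * v j := by
    rw [PiLp.inner_apply]
    simp [RCLike.inner_apply, conj_trivial, PiLp.sub_apply, PiLp.smul_apply, smul_eq_mul]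
    exact Finset.sum_congr rfl (fun j _ => mul_comm _ _)
  rw [hU, hP, hV]
  have key : ∀ j : Fin d, ((3/t^2) * x j - (2/t) * v j)^2
      = 9*(x j - t/2 * v j)^2/t^4 - 3*((x j - t/2 * v j) * v j)/t^3 + (v j)^2/(4*t^2) := by
    intro j; field_simp; ring
  have expand : ∀ i : Fin d,
      kolmogorovKernel d t x v * (-(2/t) + ((3/t^2)*x i - (2/t)*v i)^2)
      = kolmogorovKernel d t x v * (-(2/t))
        + (kolmogorovKernel d t x v * 9/t^4) * (x i - t/2*v i)^2
        + (kolmogorovKernel d t x v * (-3)/t^3) * ((x i - t/2*v i)*v i)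
        + (kolmogorovKernel d t x v / (4*t^2)) * (v i)^2 := by
    intro i; rw [key i]; ring
  simp only [expand, Finset.sum_add_distrib, ← Finset.mul_sum, Finset.sum_const,
    Finset.card_univ, Fintype.card_fin, nsmul_eq_mul]
  field_simp
  ring
end

section
/- Gradient bound for the Kolmogorov kernel: for all t > 0 and x, v ∈ ℝ^d, |∇_v G(t,x,v)| + t|∇_x G(t,x,v)| ≤ C t^{-2d-1/2} exp(-3|x - (t/2)v|²/(2t³) - |v|²/(8t)) for a constant C depending only on d. -/
open Real

section Aux

open InnerProductSpace

variable {F : Type*} [NormedAddCommGroup F] [InnerProductSpace ℝ F] [CompleteSpace F]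

lemma hasGradientAt_gauss (A c₁ c₂ c₃ r : ℝ) (q v : F) :
    HasGradientAt (fun u : F => A * Real.exp (c₁ * ‖r • u - q‖ ^ 2 + c₂ * ‖u‖ ^ 2 + c₃))
      ((A * Real.exp (c₁ * ‖r • v - q‖ ^ 2 + c₂ * ‖v‖ ^ 2 + c₃)) •
        ((2 * c₁ * r) • (r • v - q) + (2 * c₂) • v)) v := by
  set φ : F → ℝ := fun u => c₁ * ‖r • u - q‖ ^ 2 + c₂ * ‖u‖ ^ 2 + c₃ with hφdef
  have hL : HasFDerivAt (fun u : F => r • u - q)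
      (r • ContinuousLinearMap.id ℝ F) v :=
    ((hasFDerivAt_id v).const_smul r).sub_const q
  have hI : HasFDerivAt (fun u : F => ⟪r • u - q, r • u - q⟫_ℝ)
      ((fderivInnerCLM ℝ (r • v - q, r • v - q)).comp
        ((r • ContinuousLinearMap.id ℝ F).prod (r • ContinuousLinearMap.id ℝ F))) v :=
    hL.inner ℝ hL
  have h1 : HasFDerivAt (fun u : F => ‖r • u - q‖ ^ 2)
      ((fderivInnerCLM ℝ (r • v - q, r • v - q)).comp
        ((r • ContinuousLinearMap.id ℝ F).prod (r • ContinuousLinearMap.id ℝ F))) v := by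
    simpa [real_inner_self_eq_norm_sq] using hI
  have hI2 : HasFDerivAt (fun u : F => ⟪u, u⟫_ℝ)
      ((fderivInnerCLM ℝ (v, v)).comp
        ((ContinuousLinearMap.id ℝ F).prod (ContinuousLinearMap.id ℝ F))) v :=
    (hasFDerivAt_id v).inner ℝ (hasFDerivAt_id v)
  have h2 : HasFDerivAt (fun u : F => ‖u‖ ^ 2)
      ((fderivInnerCLM ℝ (v, v)).comp
        ((ContinuousLinearMap.id ℝ F).prod (ContinuousLinearMap.id ℝ F))) v := by
    simpa [real_inner_self_eq_norm_sq] using hI2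
  have hφ : HasFDerivAt φ
      (c₁ • ((fderivInnerCLM ℝ (r • v - q, r • v - q)).comp
        ((r • ContinuousLinearMap.id ℝ F).prod (r • ContinuousLinearMap.id ℝ F))) +
       c₂ • ((fderivInnerCLM ℝ (v, v)).comp
        ((ContinuousLinearMap.id ℝ F).prod (ContinuousLinearMap.id ℝ F)))) v :=
    ((h1.const_mul c₁).add (h2.const_mul c₂)).add_const c₃
  have hexp : HasFDerivAt (fun u : F => A * Real.exp (φ u))
      (A • (Real.exp (φ v) • (c₁ • ((fderivInnerCLM ℝ (r • v - q, r • v - q)).comp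
        ((r • ContinuousLinearMap.id ℝ F).prod (r • ContinuousLinearMap.id ℝ F))) +
       c₂ • ((fderivInnerCLM ℝ (v, v)).comp
        ((ContinuousLinearMap.id ℝ F).prod (ContinuousLinearMap.id ℝ F)))))) v :=
    ((Real.hasDerivAt_exp (φ v)).comp_hasFDerivAt v hφ).const_mul A
  have key : (toDual ℝ F) ((A * Real.exp (φ v)) •
        ((2 * c₁ * r) • (r • v - q) + (2 * c₂) • v)) =
      (A • (Real.exp (φ v) • (c₁ • ((fderivInnerCLM ℝ (r • v - q, r • v - q)).comp
        ((r • ContinuousLinearMap.id ℝ F).prod (r • ContinuousLinearMap.id ℝ F))) +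
       c₂ • ((fderivInnerCLM ℝ (v, v)).comp
        ((ContinuousLinearMap.id ℝ F).prod (ContinuousLinearMap.id ℝ F)))))) := by
    ext y
    simp [fderivInnerCLM_apply, inner_add_left, inner_sub_left, inner_smul_left, inner_smul_right,
      real_inner_comm (r • v - q) y, real_inner_comm v y, real_inner_smul_left,
      real_inner_smul_right, smul_smul]
    ring
  exact hasGradientAt_iff_hasFDerivAt.mpr (key ▸ hexp)

lemma exp_quad_bound (lam a : ℝ) (hl : 0 < lam) (_ha : 0 ≤ a) :
    a * Real.exp (-(lam * a ^ 2)) ≤ (Real.sqrt lam)⁻¹ := by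
  have hs : 0 < Real.sqrt lam := Real.sqrt_pos.mpr hl
  have hsq : Real.sqrt lam ^ 2 = lam := Real.sq_sqrt hl.le
  have key : a * Real.sqrt lam ≤ Real.exp (lam * a ^ 2) := by
    have h1 : (a * Real.sqrt lam) ^ 2 + 1 ≤ Real.exp ((a * Real.sqrt lam) ^ 2) :=
      Real.add_one_le_exp _
    have h2 : (a * Real.sqrt lam) ^ 2 = lam * a ^ 2 := by rw [mul_pow, hsq]; ring
    rw [h2] at h1
    nlinarith [sq_nonneg (a * Real.sqrt lam - 1), mul_nonneg _ha hs.le]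
  rw [Real.exp_neg, inv_eq_one_div, inv_eq_one_div, mul_one_div,
    div_le_div_iff₀ (Real.exp_pos _) hs]
  linarith

lemma sqrt_twothirds_le : Real.sqrt (2 / 3) ≤ 9 / 10 := by
  nlinarith [Real.sq_sqrt (show (0:ℝ) ≤ 2 / 3 by norm_num), Real.sqrt_nonneg (2 / 3)]

lemma sqrt_eight_le : Real.sqrt 8 ≤ 17 / 6 := by
  nlinarith [Real.sq_sqrt (show (0:ℝ) ≤ 8 by norm_num), Real.sqrt_nonneg 8]

lemma numeric_bound (t : ℝ) (ht : 0 < t) :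
    9 / t ^ 2 * (Real.sqrt (2 / 3) * (t * Real.sqrt t))
      + 1 / (2 * t) * (Real.sqrt 8 * Real.sqrt t) ≤ 10 / Real.sqrt t := by
  have hs : 0 < Real.sqrt t := Real.sqrt_pos.mpr ht
  have hid : 9 / t ^ 2 * (Real.sqrt (2 / 3) * (t * Real.sqrt t))
      + 1 / (2 * t) * (Real.sqrt 8 * Real.sqrt t)
      = (9 * Real.sqrt (2 / 3) + Real.sqrt 8 / 2) * (Real.sqrt t / t) := by
    field_simp
  have hsq2 : Real.sqrt t / t = 1 / Real.sqrt t := by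
    rw [div_eq_div_iff ht.ne' hs.ne', Real.mul_self_sqrt ht.le, one_mul]
  rw [hid, hsq2, mul_one_div]
  have hcoef : 9 * Real.sqrt (2 / 3) + Real.sqrt 8 / 2 ≤ 10 := by
    linarith [sqrt_twothirds_le, sqrt_eight_le]
  exact (div_le_div_iff_of_pos_right hs).mpr hcoef

end Aux

/-- Gradient bound for the Kolmogorov kernel. -/
theorem kolmogorovKernel_gradient_bound (d : ℕ) :
    ∃ C : ℝ, 0 < C ∧ ∀ (t : ℝ), 0 < t → ∀ x v : EuclideanSpace ℝ (Fin d),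
      ‖gradient (fun u => kolmogorovKernel d t x u) v‖
        + t * ‖gradient (fun y => kolmogorovKernel d t y v) x‖
      ≤ C * t ^ (-(2 * (d : ℝ)) - 1 / 2) *
          Real.exp (-(3 * ‖x - (t / 2) • v‖ ^ 2) / (2 * t ^ 3) - ‖v‖ ^ 2 / (8 * t)) := by
  refine ⟨10 * (3 / (4 * π ^ 2)) ^ ((d : ℝ) / 2), by positivity, ?_⟩
  intro t ht x v
  have htne : t ≠ 0 := ht.ne'
  set A : ℝ := (3 / (4 * π ^ 2 * t ^ 4)) ^ ((d : ℝ) / 2) with hAdef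
  have hA0 : 0 < A := by rw [hAdef]; positivity
  set a : ℝ := ‖x - (t / 2) • v‖ with hadef
  set b : ℝ := ‖v‖ with hbdef
  have ha0 : 0 ≤ a := by rw [hadef]; exact norm_nonneg _
  have hb0 : 0 ≤ b := by rw [hbdef]; exact norm_nonneg _
  set E : ℝ := Real.exp (-(3 * a ^ 2) / t ^ 3 - b ^ 2 / (4 * t)) with hEdef
  have hE0 : 0 < E := by rw [hEdef]; exact Real.exp_pos _
  set E2 : ℝ := Real.exp (-(3 * a ^ 2) / (2 * t ^ 3) - b ^ 2 / (8 * t)) with hE2def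
  have hE20 : 0 < E2 := by rw [hE2def]; exact Real.exp_pos _
  -- the gradient in v
  have hgv : HasGradientAt (fun u => kolmogorovKernel d t x u)
      ((A * E) • ((2 * (-3 / t ^ 3) * (t / 2)) • ((t / 2) • v - x) +
        (2 * (-(1 / (4 * t)))) • v)) v := by
    have h := hasGradientAt_gauss A (-3 / t ^ 3) (-(1 / (4 * t))) 0 (t / 2) x v
    have hfun : (fun u : EuclideanSpace ℝ (Fin d) => kolmogorovKernel d t x u)
        = fun u => A * Real.exp ((-3 / t ^ 3) * ‖(t / 2) • u - x‖ ^ 2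
            + (-(1 / (4 * t))) * ‖u‖ ^ 2 + 0) := by
      funext u
      rw [kolmogorovKernel, ← hAdef, norm_sub_rev]
      congr 2
      ring
    have hexparg : (-3 / t ^ 3) * ‖(t / 2) • v - x‖ ^ 2
        + (-(1 / (4 * t))) * ‖v‖ ^ 2 + 0 = -(3 * a ^ 2) / t ^ 3 - b ^ 2 / (4 * t) := by
      rw [norm_sub_rev, ← hadef, ← hbdef]; ring
    rw [hfun, hEdef, ← hexparg]
    exact h
  -- the gradient in x
  have hgx : HasGradientAt (fun y => kolmogorovKernel d t y v)
      ((A * E) • ((2 * (-3 / t ^ 3) * 1) • ((1 : ℝ) • x - (t / 2) • v) + ((2:ℝ) * 0) • x)) x := by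
    have h := hasGradientAt_gauss A (-3 / t ^ 3) 0 (-(b ^ 2 / (4 * t))) 1 ((t / 2) • v) x
    have hfun : (fun y : EuclideanSpace ℝ (Fin d) => kolmogorovKernel d t y v)
        = fun y => A * Real.exp ((-3 / t ^ 3) * ‖(1 : ℝ) • y - (t / 2) • v‖ ^ 2
            + 0 * ‖y‖ ^ 2 + (-(b ^ 2 / (4 * t)))) := by
      funext y
      rw [kolmogorovKernel, ← hAdef, ← hbdef]
      congr 2
      rw [one_smul]
      ring
    have hexparg : (-3 / t ^ 3) * ‖(1 : ℝ) • x - (t / 2) • v‖ ^ 2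
        + 0 * ‖x‖ ^ 2 + (-(b ^ 2 / (4 * t))) = -(3 * a ^ 2) / t ^ 3 - b ^ 2 / (4 * t) := by
      rw [one_smul, ← hadef]; ring
    rw [hfun, hEdef, ← hexparg]
    exact h
  rw [hgv.gradient, hgx.gradient]
  -- simplify the gradient vectors
  have hc1 : (2 * (-3 / t ^ 3) * (t / 2)) = -(3 / t ^ 2) := by field_simp
  have hc2 : (2 * (-(1 / (4 * t)))) = -(1 / (2 * t)) := by ring
  have hc3 : (2 * (-3 / t ^ 3) * 1) = -(6 / t ^ 3) := by ring
  rw [hc1, hc2, hc3, one_smul, mul_zero, zero_smul, add_zero]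
  -- norm bounds for the two gradients
  have key1 : ‖(A * E) • ((-(3 / t ^ 2)) • ((t / 2) • v - x) + (-(1 / (2 * t))) • v)‖
      ≤ A * E * (3 / t ^ 2 * a + 1 / (2 * t) * b) := by
    rw [norm_smul]
    have h1 : ‖(-(3 / t ^ 2)) • ((t / 2) • v - x) + (-(1 / (2 * t))) • v‖
        ≤ 3 / t ^ 2 * a + 1 / (2 * t) * b := by
      refine (norm_add_le _ _).trans ?_
      rw [norm_smul, norm_smul, norm_sub_rev, ← hadef, ← hbdef,
        Real.norm_eq_abs, Real.norm_eq_abs, abs_neg, abs_neg,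
        abs_of_pos (by positivity : (0:ℝ) < 3 / t ^ 2),
        abs_of_pos (by positivity : (0:ℝ) < 1 / (2 * t))]
    calc ‖A * E‖ * ‖(-(3 / t ^ 2)) • ((t / 2) • v - x) + (-(1 / (2 * t))) • v‖
        = (A * E) * ‖(-(3 / t ^ 2)) • ((t / 2) • v - x) + (-(1 / (2 * t))) • v‖ := by
          rw [Real.norm_eq_abs, abs_of_pos (by positivity)]
      _ ≤ A * E * (3 / t ^ 2 * a + 1 / (2 * t) * b) := by
          exact mul_le_mul_of_nonneg_left h1 (by positivity)
  have key2 : ‖(A * E) • ((-(6 / t ^ 3)) • (x - (t / 2) • v))‖ = A * E * (6 / t ^ 3 * a) := by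
    rw [norm_smul, norm_smul, ← hadef, Real.norm_eq_abs, Real.norm_eq_abs, abs_neg,
      abs_of_pos (by positivity : (0:ℝ) < A * E),
      abs_of_pos (by positivity : (0:ℝ) < 6 / t ^ 3)]
  have hsum : A * E * (3 / t ^ 2 * a + 1 / (2 * t) * b) + t * (A * E * (6 / t ^ 3 * a))
      = A * (E * (9 / t ^ 2 * a + 1 / (2 * t) * b)) := by
    field_simp
    ring
  have hEsplit : E = E2 * (Real.exp (-(3 * a ^ 2) / (2 * t ^ 3)) *
      Real.exp (-(b ^ 2 / (8 * t)))) := by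
    rw [hEdef, hE2def, ← Real.exp_add, ← Real.exp_add]
    congr 1
    field_simp
    ring
  -- quadratic exponential bounds
  have hq1 : a * Real.exp (-(3 * a ^ 2) / (2 * t ^ 3)) ≤ Real.sqrt (2 / 3) * (t * Real.sqrt t) := by
    have h := exp_quad_bound (3 / (2 * t ^ 3)) a (by positivity) ha0
    rw [show -(3 / (2 * t ^ 3) * a ^ 2) = -(3 * a ^ 2) / (2 * t ^ 3) by ring] at h
    have heq : (Real.sqrt (3 / (2 * t ^ 3)))⁻¹ = Real.sqrt (2 / 3) * (t * Real.sqrt t) := by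
      rw [← Real.sqrt_inv, show (3 / (2 * t ^ 3))⁻¹ = (2 / 3) * t ^ 2 * t by field_simp,
        Real.sqrt_mul (by positivity) t, Real.sqrt_mul (by norm_num : (0:ℝ) ≤ 2/3) (t ^ 2),
        Real.sqrt_sq ht.le]
      ring
    exact heq ▸ h
  have hq2 : b * Real.exp (-(b ^ 2 / (8 * t))) ≤ Real.sqrt 8 * Real.sqrt t := by
    have h := exp_quad_bound (1 / (8 * t)) b (by positivity) hb0
    rw [show -(1 / (8 * t) * b ^ 2) = -(b ^ 2 / (8 * t)) by ring] at h
    have heq : (Real.sqrt (1 / (8 * t)))⁻¹ = Real.sqrt 8 * Real.sqrt t := by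
      rw [← Real.sqrt_inv, show (1 / (8 * t))⁻¹ = 8 * t by field_simp,
        Real.sqrt_mul (by norm_num : (0:ℝ) ≤ 8) t]
    exact heq ▸ h
  have he1 : Real.exp (-(3 * a ^ 2) / (2 * t ^ 3)) ≤ 1 := by
    rw [Real.exp_le_one_iff, neg_div]
    exact neg_nonpos.mpr (by positivity)
  have he2 : Real.exp (-(b ^ 2 / (8 * t))) ≤ 1 := by
    rw [Real.exp_le_one_iff]
    exact neg_nonpos.mpr (by positivity)
  -- the numeric bound
  have hnum := numeric_bound t ht
  have hApow : A = (3 / (4 * π ^ 2)) ^ ((d : ℝ) / 2) * t ^ (-(2 * (d : ℝ))) := by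
    rw [hAdef, show (3 / (4 * π ^ 2 * t ^ 4)) = (3 / (4 * π ^ 2)) / t ^ 4 by rw [div_div],
      Real.div_rpow (by positivity) (by positivity),
      ← Real.rpow_natCast t 4, ← Real.rpow_mul ht.le,
      show ((4 : ℕ) : ℝ) * ((d : ℝ) / 2) = 2 * (d : ℝ) by push_cast; ring,
      div_eq_mul_inv, ← Real.rpow_neg ht.le]
  have hpow2 : t ^ (-(2 * (d : ℝ)) - 1 / 2) = t ^ (-(2 * (d : ℝ))) * (Real.sqrt t)⁻¹ := by
    rw [show (-(2 * (d : ℝ)) - 1 / 2) = (-(2 * (d : ℝ))) + (-(1 / 2)) by ring,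
      Real.rpow_add ht, Real.sqrt_eq_rpow, ← Real.rpow_neg ht.le]
  rw [key2]
  refine le_trans (add_le_add_left key1 _) ?_
  rw [hsum]
  calc A * (E * (9 / t ^ 2 * a + 1 / (2 * t) * b))
      = A * (E2 * (9 / t ^ 2 * (a * Real.exp (-(3 * a ^ 2) / (2 * t ^ 3)))
            * Real.exp (-(b ^ 2 / (8 * t)))
          + 1 / (2 * t) * Real.exp (-(3 * a ^ 2) / (2 * t ^ 3))
            * (b * Real.exp (-(b ^ 2 / (8 * t)))))) := by
        rw [hEsplit]; ring
    _ ≤ A * (E2 * (9 / t ^ 2 * (Real.sqrt (2 / 3) * (t * Real.sqrt t)) * 1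
          + 1 / (2 * t) * 1 * (Real.sqrt 8 * Real.sqrt t))) := by
        gcongr
    _ ≤ A * (E2 * (10 / Real.sqrt t)) := by
        have h' : 9 / t ^ 2 * (Real.sqrt (2 / 3) * (t * Real.sqrt t)) * 1
            + 1 / (2 * t) * 1 * (Real.sqrt 8 * Real.sqrt t) ≤ 10 / Real.sqrt t := by
          simpa using hnum
        exact mul_le_mul_of_nonneg_left
          (mul_le_mul_of_nonneg_left h' hE20.le) hA0.le
    _ = 10 * (3 / (4 * π ^ 2)) ^ ((d : ℝ) / 2) * t ^ (-(2 * (d : ℝ)) - 1 / 2) * E2 := by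
        rw [hApow, hpow2]; ring
end
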